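/- arXiv:1307.2702 — 2 statements merged into one kernel-verified Lean document; each statement's English description precedes it below -/
import Mathlib

section
/- Fix a prime ℓ, n ≥ 0, and ν ∈ Part(n,ℓ). The map ψ^co_ν sending a tuple (λ^(ℓ^i))_{i≥0}, where λ^(ℓ^i) is an ℓ-regular partition of m_{ℓ^i}(ν), to the partition Σ_{i≥0} ℓ^i · (λ^(ℓ^i))ᵗ of n, is injective. -/
/-- A function `f : ℕ → ℕ` is a partition of `m` if it is weakly decreasing,
has finite support, and its parts sum to `m`.  Here `f i` is the `(i+1)`-st part
`λ_{i+1}` of the partition. -/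
def IsPartition (m : ℕ) (f : ℕ → ℕ) : Prop :=
  Antitone f ∧ (Function.support f).Finite ∧ ∑ᶠ i, f i = m

/-- The transpose partition: `ptranspose f j` is the `(j+1)`-st part `(fᵗ)_{j+1}`
of the transpose, i.e. the number of indices `i` with `f i ≥ j + 1`. -/
noncomputable def ptranspose (f : ℕ → ℕ) : ℕ → ℕ :=
  fun j => {i : ℕ | j + 1 ≤ f i}.ncard

/-- `pmult f j` is the multiplicity `m_j(f)` of `j ≥ 1` as a part of `f`. -/
noncomputable def pmult (f : ℕ → ℕ) (j : ℕ) : ℕ :=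
  {i : ℕ | f i = j}.ncard

/-- All (nonzero) parts of `f` are powers of `ℓ`. -/
def PartsPowersOf (ℓ : ℕ) (f : ℕ → ℕ) : Prop :=
  ∀ i, f i ≠ 0 → ∃ k, f i = ℓ ^ k

/-- `f` is `ℓ`-regular: every part `j ≥ 1` has multiplicity `< ℓ`. -/
def IsRegularPartition (ℓ : ℕ) (f : ℕ → ℕ) : Prop :=
  ∀ j, 1 ≤ j → pmult f j < ℓ

/-- The combinatorial generalized Springer map: given a tuple `lam` where `lam i`
is (meant to be) an `ℓ`-regular partition of `m_{ℓ^i}(ν)`, it returns the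
partition `Σ_{i ≥ 0} ℓ^i · (lam i)ᵗ` (componentwise operations). -/
noncomputable def psiCo (ℓ : ℕ) (lam : ℕ → ℕ → ℕ) : ℕ → ℕ :=
  fun j => ∑ᶠ i, ℓ ^ i * ptranspose (lam i) j

/-!
Subtracting consecutive parts of `ψ = Σ ℓ^i (λ^(ℓ^i))ᵗ` gives
`ψ_j - ψ_{j+1} = Σ_i ℓ^i m_{j+1}(λ^(ℓ^i))`, and `ℓ`-regularity makes the multiplicities
`m_{j+1}(λ^(ℓ^i))` the base-`ℓ` digits of this number. So `ψ` determines every multiplicity of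
every `λ^(ℓ^i)`, and a partition is determined by its multiplicities.
-/

lemma Nat.ofDigits_map_range (b N : ℕ) (a : ℕ → ℕ) :
    Nat.ofDigits b ((List.range N).map a) = ∑ i ∈ Finset.range N, b ^ i * a i := by
  induction N with
  | zero => simp
  | succ N ih =>
    simp [List.range_succ, Nat.ofDigits_append, ih, Finset.sum_range_succ, mul_comm]

lemma Nat.eq_of_sum_range_pow_mul_eq {b N : ℕ} (hb : 1 < b) {a a' : ℕ → ℕ}
    (ha : ∀ i < N, a i < b) (ha' : ∀ i < N, a' i < b)
    (h : ∑ i ∈ Finset.range N, b ^ i * a i = ∑ i ∈ Finset.range N, b ^ i * a' i) :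
    ∀ i < N, a i = a' i := by
  have hdigits := Nat.ofDigits_inj_of_len_eq hb (L1 := (List.range N).map a)
    (L2 := (List.range N).map a') (by simp) (by simpa using ha) (by simpa using ha')
    (by rwa [Nat.ofDigits_map_range, Nat.ofDigits_map_range])
  simpa [List.map_inj_left] using hdigits

section Transpose

variable {f g : ℕ → ℕ}

lemma ptranspose_zero (j : ℕ) : ptranspose 0 j = 0 := by
  simp [ptranspose]

lemma ptranspose_eq_pmult_add (hf : (Function.support f).Finite) (j : ℕ) :
    ptranspose f j = pmult f (j + 1) + ptranspose f (j + 1) := by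
  have hsplit : {a | j + 1 ≤ f a} = {a | f a = j + 1} ∪ {a | j + 1 + 1 ≤ f a} := by
    ext a; simp only [Set.mem_ofPred_eq, Set.mem_union]; omega
  have hdisj : Disjoint {a | f a = j + 1} {a | j + 1 + 1 ≤ f a} :=
    Set.disjoint_left.2 fun a (ha : f a = j + 1) (hb : j + 1 + 1 ≤ f a) => by omega
  rw [ptranspose, pmult, hsplit, Set.ncard_union_eq hdisj
    (hf.subset fun a (ha : f a = j + 1) => by simp [ha])
    (hf.subset fun a (ha : j + 1 + 1 ≤ f a) => by simp only [Function.mem_support]; omega)]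
  rfl

lemma lt_ptranspose_iff (hmono : Antitone f) (hf : (Function.support f).Finite) (a j : ℕ) :
    a < ptranspose f j ↔ j + 1 ≤ f a := by
  constructor
  · intro ha
    by_contra! hfa
    have hsub : {b | j + 1 ≤ f b} ⊆ Set.Iio a := fun b (hb : j + 1 ≤ f b) => by
      by_contra! hab
      have := hmono (not_lt.1 hab)
      omega
    have := Set.ncard_le_ncard hsub (Set.finite_Iio a)
    rw [← Finset.coe_Iio, Set.ncard_coe_finset, Nat.card_Iio] at this
    exact (ha.trans_le this).false
  · intro hfa
    have hsub : Set.Iic a ⊆ {b | j + 1 ≤ f b} := fun b (hb : b ≤ a) => (hmono hb).trans' hfa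
    have := Set.ncard_le_ncard hsub
      (hf.subset fun b (hb : j + 1 ≤ f b) => by simp only [Function.mem_support]; omega)
    rwa [← Finset.coe_Iic, Set.ncard_coe_finset, Nat.card_Iic] at this

lemma eq_of_ptranspose_eq (hf : Antitone f) (hf' : (Function.support f).Finite)
    (hg : Antitone g) (hg' : (Function.support g).Finite)
    (h : ptranspose f = ptranspose g) : f = g := by
  funext a
  have hle : ∀ k, k ≤ f a ↔ k ≤ g a
    | 0 => by simp
    | j + 1 => by rw [← lt_ptranspose_iff hf hf', ← lt_ptranspose_iff hg hg', h]
  exact le_antisymm ((hle _).1 le_rfl) ((hle _).2 le_rfl)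

end Transpose

namespace IsPartition

variable {m m' : ℕ} {f g : ℕ → ℕ}

lemma le (hf : IsPartition m f) (a : ℕ) : f a ≤ m :=
  hf.2.2 ▸ single_le_finsum a hf.2.1 fun _ => Nat.zero_le _

lemma eq_zero (hf : IsPartition 0 f) : f = 0 :=
  funext fun a => Nat.le_zero.1 (hf.le a)

lemma pmult_eq_zero (hf : IsPartition m f) {k : ℕ} (hk : m < k) : pmult f k = 0 := by
  have hempty : {a | f a = k} = ∅ :=
    Set.eq_empty_of_forall_notMem fun a (ha : f a = k) => by have := hf.le a; omega
  rw [pmult, hempty, Set.ncard_empty]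

lemma ptranspose_eq_zero (hf : IsPartition m f) {j : ℕ} (hj : m ≤ j) : ptranspose f j = 0 := by
  have hempty : {a | j + 1 ≤ f a} = ∅ :=
    Set.eq_empty_of_forall_notMem fun a (ha : j + 1 ≤ f a) => by have := hf.le a; omega
  rw [ptranspose, hempty, Set.ncard_empty]

lemma ptranspose_eq_of_pmult_eq (hf : IsPartition m f) (hg : IsPartition m' g)
    (h : ∀ j, pmult f (j + 1) = pmult g (j + 1)) : ptranspose f = ptranspose g := by
  have htail : ∀ j, m + m' ≤ j → ptranspose f j = ptranspose g j := fun j hj => by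
    rw [hf.ptranspose_eq_zero (by omega), hg.ptranspose_eq_zero (by omega)]
  funext j
  rcases le_total j (m + m') with hj | hj
  · induction hj using Nat.decreasingInduction with
    | self => exact htail _ le_rfl
    | of_succ k _ ih =>
      rw [ptranspose_eq_pmult_add hf.2.1, ptranspose_eq_pmult_add hg.2.1, h, ih]
  · exact htail j hj

lemma eq_of_pmult_eq (hf : IsPartition m f) (hg : IsPartition m' g)
    (h : ∀ j, pmult f (j + 1) = pmult g (j + 1)) : f = g :=
  eq_of_ptranspose_eq hf.1 hf.2.1 hg.1 hg.2.1 (hf.ptranspose_eq_of_pmult_eq hg h)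

end IsPartition

section PsiCo

variable {ℓ N : ℕ} {c : ℕ → ℕ} {lam kap : ℕ → ℕ → ℕ}

lemma psiCo_eq_sum_range (hN : ∀ i, N ≤ i → lam i = 0) (j : ℕ) :
    psiCo ℓ lam j = ∑ i ∈ Finset.range N, ℓ ^ i * ptranspose (lam i) j := by
  refine finsum_eq_finsetSum_of_support_subset _ fun i hi => ?_
  by_contra hiN
  simp_all [ptranspose_zero]

lemma psiCo_eq_sum_pmult_add (hN : ∀ i, N ≤ i → lam i = 0)
    (hlam : ∀ i, (Function.support (lam i)).Finite) (j : ℕ) :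
    psiCo ℓ lam j =
      ∑ i ∈ Finset.range N, ℓ ^ i * pmult (lam i) (j + 1) + psiCo ℓ lam (j + 1) := by
  rw [psiCo_eq_sum_range hN, psiCo_eq_sum_range hN, ← Finset.sum_add_distrib]
  refine Finset.sum_congr rfl fun i _ => ?_
  rw [ptranspose_eq_pmult_add (hlam i), mul_add]

lemma pmult_eq_of_psiCo_eq (hℓ : 1 < ℓ) (hc : ∀ i, N ≤ i → c i = 0)
    (hlam : ∀ i, IsPartition (c i) (lam i) ∧ IsRegularPartition ℓ (lam i))
    (hkap : ∀ i, IsPartition (c i) (kap i) ∧ IsRegularPartition ℓ (kap i))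
    (heq : psiCo ℓ lam = psiCo ℓ kap) (i j : ℕ) :
    pmult (lam i) (j + 1) = pmult (kap i) (j + 1) := by
  have hlamN : ∀ i, N ≤ i → lam i = 0 := fun i hi => (hc i hi ▸ (hlam i).1).eq_zero
  have hkapN : ∀ i, N ≤ i → kap i = 0 := fun i hi => (hc i hi ▸ (hkap i).1).eq_zero
  by_cases hi : i < N
  · have hlamj := psiCo_eq_sum_pmult_add (ℓ := ℓ) hlamN (fun i => (hlam i).1.2.1) j
    have hkapj := psiCo_eq_sum_pmult_add (ℓ := ℓ) hkapN (fun i => (hkap i).1.2.1) j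
    rw [heq, hkapj, Nat.add_right_cancel_iff] at hlamj
    exact Nat.eq_of_sum_range_pow_mul_eq hℓ (fun i _ => (hlam i).2 (j + 1) j.succ_pos)
      (fun i _ => (hkap i).2 (j + 1) j.succ_pos) hlamj.symm i hi
  · rw [hlamN i (not_lt.1 hi), hkapN i (not_lt.1 hi)]

end PsiCo

theorem psiCo_injective_general (ℓ n : ℕ) (hℓ : ℓ.Prime)
    (ν : ℕ → ℕ) (hν : IsPartition n ν)
    (lam kap : ℕ → ℕ → ℕ)
    (hlam : ∀ i, IsPartition (pmult ν (ℓ ^ i)) (lam i) ∧ IsRegularPartition ℓ (lam i))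
    (hkap : ∀ i, IsPartition (pmult ν (ℓ ^ i)) (kap i) ∧ IsRegularPartition ℓ (kap i))
    (heq : psiCo ℓ lam = psiCo ℓ kap) :
    lam = kap := by
  have hc : ∀ i, n ≤ i → pmult ν (ℓ ^ i) = 0 := fun i hi =>
    hν.pmult_eq_zero ((Nat.lt_pow_self hℓ.one_lt).trans_le (Nat.pow_le_pow_right hℓ.pos hi))
  funext i
  exact (hlam i).1.eq_of_pmult_eq (hkap i).1 (pmult_eq_of_psiCo_eq hℓ.one_lt hc hlam hkap heq i)

/-- For fixed `ν ∈ Part(n,ℓ)`, the map `ψ^co_ν` sending a tuple of `ℓ`-regular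
partitions `lam i` of `m_{ℓ^i}(ν)` to `Σ_{i≥0} ℓ^i · (lam i)ᵗ` is injective. -/
theorem psiCo_injective (ℓ n : ℕ) (hℓ : ℓ.Prime)
    (ν : ℕ → ℕ) (hν : IsPartition n ν) (hpow : PartsPowersOf ℓ ν)
    (lam kap : ℕ → ℕ → ℕ)
    (hlam : ∀ i, IsPartition (pmult ν (ℓ ^ i)) (lam i) ∧ IsRegularPartition ℓ (lam i))
    (hkap : ∀ i, IsPartition (pmult ν (ℓ ^ i)) (kap i) ∧ IsRegularPartition ℓ (kap i))
    (heq : psiCo ℓ lam = psiCo ℓ kap) :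
    lam = kap :=
  psiCo_injective_general ℓ n hℓ ν hν lam kap hlam hkap heq
end

section
/- Fix a prime ℓ, ν ∈ Part(n,ℓ), and ℓ-regular partitions λ^(ℓ^i) of m_{ℓ^i}(ν) for each i ≥ 0. Set μ = Σ_{i≥0} ℓ^i·(λ^(ℓ^i))ᵗ. Then for every j ≥ 1, μ_j − μ_{j+1} = Σ_{i≥0} m_j(λ^(ℓ^i))·ℓ^i, and this is the base-ℓ expansion of μ_j − μ_{j+1} (i.e. each digit m_j(λ^(ℓ^i)) satisfies 0 ≤ m_j(λ^(ℓ^i)) < ℓ). -/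
lemma zero_of_partition_zero {f : ℕ → ℕ} (h : IsPartition 0 f) : ∀ k, f k = 0 := by
  intro k
  have := single_le_finsum k h.2.1 (fun j => Nat.zero_le (f j))
  rw [h.2.2] at this
  omega

lemma ptr_step {f : ℕ → ℕ} (hf : (Function.support f).Finite) {j : ℕ} (hj : 1 ≤ j) :
    ptranspose f (j - 1) = ptranspose f j + pmult f j := by
  have h1 : {i : ℕ | j ≤ f i} = {i : ℕ | j + 1 ≤ f i} ∪ {i : ℕ | f i = j} := by
    ext i; simp only [Set.mem_setOf_eq, Set.mem_union]; omega
  have hsub1 : {i : ℕ | j + 1 ≤ f i} ⊆ Function.support f := fun i hi => by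
    simp only [Set.mem_setOf_eq] at hi; simp [Function.mem_support]; omega
  have hsub2 : {i : ℕ | f i = j} ⊆ Function.support f := fun i hi => by
    simp only [Set.mem_setOf_eq] at hi; simp [Function.mem_support]; omega
  have hd : Disjoint {i : ℕ | j + 1 ≤ f i} {i : ℕ | f i = j} := by
    rw [Set.disjoint_left]; intro i hi hi'
    simp only [Set.mem_setOf_eq] at hi hi'; omega
  have : ptranspose f (j - 1) = {i : ℕ | j ≤ f i}.ncard := by
    unfold ptranspose
    congr 1; ext i; simp only [Set.mem_setOf_eq]; omega
  rw [this, h1, Set.ncard_union_eq hd (hf.subset hsub1) (hf.subset hsub2)]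
  rfl

/-- Let `μ = Σ_{i≥0} ℓ^i·(lam i)ᵗ` for `ℓ`-regular partitions `lam i` of
`m_{ℓ^i}(ν)`, `ν ∈ Part(n,ℓ)`.  Then for every `j ≥ 1`,
`μ_j − μ_{j+1} = Σ_{i≥0} m_j(lam i)·ℓ^i`, and this is a base-`ℓ` expansion:
each digit satisfies `m_j(lam i) < ℓ`.  (Recall `μ_j = psiCo ℓ lam (j-1)`.) -/
theorem psiCo_diff_base_ell (ℓ n : ℕ) (hℓ : ℓ.Prime)
    (ν : ℕ → ℕ) (hν : IsPartition n ν) (hpow : PartsPowersOf ℓ ν)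
    (lam : ℕ → ℕ → ℕ)
    (hlam : ∀ i, IsPartition (pmult ν (ℓ ^ i)) (lam i) ∧ IsRegularPartition ℓ (lam i)) :
    ∀ j, 1 ≤ j →
      psiCo ℓ lam (j - 1) = psiCo ℓ lam j + ∑ᶠ i, pmult (lam i) j * ℓ ^ i ∧
      ∀ i, pmult (lam i) j < ℓ := by
  intro j hj
  -- the set of relevant indices i is finite
  have hT : {i : ℕ | pmult ν (ℓ ^ i) ≠ 0}.Finite := by
    have himg : (ν '' Function.support ν).Finite := hν.2.1.image ν
    have hinj : Function.Injective (fun i : ℕ => ℓ ^ i) :=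
      fun a b h => Nat.pow_right_injective hℓ.two_le h
    refine (himg.preimage hinj.injOn).subset ?_
    intro i hi
    simp only [Set.mem_setOf_eq, pmult] at hi
    have hne : {k : ℕ | ν k = ℓ ^ i}.Nonempty := by
      by_contra h
      rw [Set.not_nonempty_iff_eq_empty] at h
      simp [h] at hi
    obtain ⟨k, hk⟩ := hne
    refine ⟨k, ?_, hk⟩
    rw [Function.mem_support, hk]
    exact pow_ne_zero i hℓ.ne_zero
  -- if pmult ν (ℓ^i) = 0 then lam i is identically 0
  have hzero : ∀ i, pmult ν (ℓ ^ i) = 0 → ∀ k, lam i k = 0 := by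
    intro i h0 k
    exact zero_of_partition_zero (h0 ▸ (hlam i).1) k
  have hsupA : ∀ j' : ℕ, (Function.support fun i => ℓ ^ i * ptranspose (lam i) j').Finite := by
    intro j'
    refine hT.subset ?_
    intro i hi h0
    apply hi
    have : ptranspose (lam i) j' = 0 := by
      unfold ptranspose
      convert Set.ncard_empty ℕ using 2
      ext k; simp [hzero i h0 k]
    simp [this]
  have hsupB : (Function.support fun i => ℓ ^ i * pmult (lam i) j).Finite := by
    refine hT.subset ?_
    intro i hi h0
    apply hi
    have : pmult (lam i) j = 0 := by
      unfold pmult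
      convert Set.ncard_empty ℕ using 2
      ext k; simp [hzero i h0 k]; omega
    simp [this]
  constructor
  · have step : ∀ i, ℓ ^ i * ptranspose (lam i) (j - 1)
        = ℓ ^ i * ptranspose (lam i) j + ℓ ^ i * pmult (lam i) j := by
      intro i
      rw [ptr_step (hlam i).1.2.1 hj, Nat.mul_add]
    calc psiCo ℓ lam (j - 1)
        = ∑ᶠ i, (ℓ ^ i * ptranspose (lam i) j + ℓ ^ i * pmult (lam i) j) := by
          unfold psiCo; exact finsum_congr step
      _ = (∑ᶠ i, ℓ ^ i * ptranspose (lam i) j) + ∑ᶠ i, ℓ ^ i * pmult (lam i) j :=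
          finsum_add_distrib (hsupA j) hsupB
      _ = psiCo ℓ lam j + ∑ᶠ i, pmult (lam i) j * ℓ ^ i := by
          rw [psiCo]; congr 1; exact finsum_congr fun i => Nat.mul_comm _ _
  · exact fun i => (hlam i).2 j hj
end
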